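/- arXiv:1306.5443 — 5 statements merged into one kernel-verified Lean document; each statement's English description precedes it below -/
import Mathlib

section
/- Let G be a finite group with commutator subgroup [G,G] cyclic of order p^k for a prime p, and let H be a subgroup of G. Then either H equals its normal closure H^G, or H is contained in a unique maximal subgroup of H^G. -/
/-!
The subgroup `H ⊔ [G, G]` contains the commutator subgroup, so it is normal and
`H ≤ H^G ≤ H ⊔ [G, G]`. By Dedekind's modular law every `K` with `H ≤ K ≤ H ⊔ [G, G]` equals
`H ⊔ (K ⊓ [G, G])`, and the subgroups of the cyclic `p`-group `[G, G]` form a chain. Hence the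
subgroups between `H` and `H^G` form a finite chain, which has a unique maximal element below `H^G`.
-/

open Subgroup
open scoped Pointwise

namespace IsCyclic

variable {C : Type*} [Group C] [Finite C] [IsCyclic C]

theorem mem_of_pow_card_eq_one (B : Subgroup C) {x : C} (hx : x ^ Nat.card B = 1) : x ∈ B := by
  classical
  have := Fintype.ofFinite C
  have hBT : (B : Set C) ⊆ {y | y ^ Nat.card B = 1} := fun y hy =>
    orderOf_dvd_iff_pow_eq_one.mp (B.orderOf_dvd_natCard hy)
  have hTB : {y : C | y ^ Nat.card B = 1}.ncard ≤ (B : Set C).ncard := by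
    rw [Set.ncard_eq_toFinset_card', Set.toFinset_ofPred, ← Nat.card_coe_set_eq]
    exact card_pow_eq_one_le Nat.card_pos
  rw [← SetLike.mem_coe, Set.eq_of_subset_of_ncard_le hBT hTB]
  exact hx

theorem le_of_card_dvd {A B : Subgroup C} (h : Nat.card A ∣ Nat.card B) : A ≤ B := fun _ hx =>
  mem_of_pow_card_eq_one B <| orderOf_dvd_iff_pow_eq_one.mp <|
    (A.orderOf_dvd_natCard hx).trans h

theorem le_total_of_card_eq_prime_pow {p k : ℕ} (hp : p.Prime) (hC : Nat.card C = p ^ k)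
    (A B : Subgroup C) : A ≤ B ∨ B ≤ A := by
  obtain ⟨a, -, ha⟩ := (Nat.dvd_prime_pow hp).mp (hC ▸ A.card_subgroup_dvd_card)
  obtain ⟨b, -, hb⟩ := (Nat.dvd_prime_pow hp).mp (hC ▸ B.card_subgroup_dvd_card)
  rcases le_total a b with hab | hba
  · exact .inl (le_of_card_dvd (ha ▸ hb ▸ Nat.pow_dvd_pow p hab))
  · exact .inr (le_of_card_dvd (ha ▸ hb ▸ Nat.pow_dvd_pow p hba))

end IsCyclic

theorem Subgroup.le_total_inf_of_isCyclic {G : Type*} [Group G] {N : Subgroup G}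
    [Finite N] [IsCyclic N] {p k : ℕ} (hp : p.Prime) (hN : Nat.card N = p ^ k)
    (A B : Subgroup G) : A ⊓ N ≤ B ⊓ N ∨ B ⊓ N ≤ A ⊓ N := by
  simp only [← subgroupOf_map_subtype]
  exact (IsCyclic.le_total_of_card_eq_prime_pow hp hN _ _).imp (map_mono ·) (map_mono ·)

theorem Subgroup.eq_sup_inf_of_le_sup {G : Type*} [Group G] {H K N : Subgroup G} [N.Normal]
    (hHK : H ≤ K) (hK : K ≤ H ⊔ N) : K = H ⊔ K ⊓ N := by
  refine le_antisymm (fun x hx => ?_) (sup_le hHK inf_le_left)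
  have hx' : x ∈ (H : Set G) * ↑(N ⊓ K) := by
    rw [mul_inf_assoc H N K hHK, ← mul_normal]
    exact ⟨hK hx, hx⟩
  obtain ⟨h, hh, n, hn, rfl⟩ := hx'
  exact mul_mem (mem_sup_left hh) (mem_sup_right (inf_comm N K ▸ hn))

theorem IsChain.existsUnique_maximal_Ico {α : Type*} [PartialOrder α] {a b : α} (hab : a < b)
    (hfin : (Set.Ico a b).Finite) (hchain : IsChain (· ≤ ·) (Set.Ico a b)) :
    ∃! m, a ≤ m ∧ m < b ∧ ∀ k, m ≤ k → k < b → k = m := by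
  obtain ⟨m, ⟨ham, hmb⟩, hmax⟩ := hfin.exists_maximalFor id _ ⟨a, le_rfl, hab⟩
  have hm : ∀ k, m ≤ k → k < b → k = m := fun k hmk hkb =>
    le_antisymm (hmax ⟨ham.trans hmk, hkb⟩ hmk) hmk
  refine ⟨m, ⟨ham, hmb, hm⟩, fun m' ⟨ham', hm'b, hm'⟩ => ?_⟩
  rcases hchain.total ⟨ham', hm'b⟩ ⟨ham, hmb⟩ with h | h
  · exact (hm' m h hmb).symm
  · exact hm m' h hm'b

theorem Subgroup.isChain_Icc_sup_of_isCyclic {G : Type*} [Group G] {H N : Subgroup G}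
    [N.Normal] [Finite N] [IsCyclic N] {p k : ℕ} (hp : p.Prime) (hN : Nat.card N = p ^ k) :
    IsChain (· ≤ ·) (Set.Icc H (H ⊔ N)) := by
  rintro K₁ ⟨hHK₁, hK₁⟩ K₂ ⟨hHK₂, hK₂⟩ -
  rw [eq_sup_inf_of_le_sup hHK₁ hK₁, eq_sup_inf_of_le_sup hHK₂ hK₂]
  exact (le_total_inf_of_isCyclic hp hN K₁ K₂).imp
    (sup_le_sup_left · H) (sup_le_sup_left · H)

theorem stmt_3 {G : Type*} [Group G] [Finite G] (p k : ℕ) (hp : p.Prime)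
    (hcyc : IsCyclic (commutator G)) (hcard : Nat.card (commutator G) = p ^ k)
    (H : Subgroup G) :
    H = Subgroup.normalClosure (H : Set G) ∨
      ∃! M : Subgroup G, H ≤ M ∧ M < Subgroup.normalClosure (H : Set G) ∧
        ∀ K : Subgroup G, M ≤ K → K < Subgroup.normalClosure (H : Set G) → K = M := by
  by_cases hHN : H = normalClosure (H : Set G)
  · exact .inl hHN
  have : (H ⊔ commutator G).Normal := Normal.of_commutator_le G le_sup_right
  have hle : normalClosure (H : Set G) ≤ H ⊔ commutator G :=
    normalClosure_le_normal (le_sup_left (a := H))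
  refine .inr (IsChain.existsUnique_maximal_Ico (le_normalClosure.lt_of_ne hHN)
    (Set.toFinite _) ?_)
  exact (isChain_Icc_sup_of_isCyclic hp hcard).mono
    (Set.Ico_subset_Icc_self.trans (Set.Icc_subset_Icc_right hle))
end

section
/- If G is a finite group whose commutator subgroup [G,G] is cyclic, and S is a generating set of G, then [G,G] is generated by the set of commutators {[a,b] : a, b ∈ S}. -/
/-!
Let `N` be the subgroup generated by the commutators of elements of `S`. It lies in the cyclic
normal subgroup `[G,G]`, and every endomorphism of a cyclic group is a power map, so conjugation
by any `g` maps `N` into itself: `N` is normal. Modulo `N` the images of the generators commute,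
so `G ⧸ N` is abelian and `[G,G] ≤ N`.
-/

open scoped commutatorElement

namespace Subgroup

variable {G : Type*} [Group G]

theorem normal_of_le_of_isCyclic {C H : Subgroup G} [C.Normal] [IsCyclic C] (hHC : H ≤ C) :
    H.Normal where
  conj_mem h hh g := by
    obtain ⟨m, hm⟩ := (MulAut.conjNormal (H := C) g).toMonoidHom.map_cyclic
    have := congrArg Subtype.val (hm ⟨h, hHC hh⟩)
    rw [MulEquiv.coe_toMonoidHom, MulAut.conjNormal_apply] at this
    rw [this]
    exact zpow_mem hh m

theorem commutator_le_of_commutatorElement_mem {S : Set G} (hS : closure S = ⊤) {N : Subgroup G}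
    [N.Normal] (hSN : ∀ a ∈ S, ∀ b ∈ S, ⁅a, b⁆ ∈ N) : _root_.commutator G ≤ N := by
  rw [← Normal.quotient_commutative_iff_commutator_le]
  have hS' : closure (QuotientGroup.mk' N '' S) = ⊤ := by
    rw [← MonoidHom.map_closure, hS, ← MonoidHom.range_eq_map, MonoidHom.range_eq_top]
    exact QuotientGroup.mk'_surjective N
  have hcomm := isMulCommutative_closure (k := QuotientGroup.mk' N '' S) <| by
    rintro _ ⟨a, ha, rfl⟩ _ ⟨b, hb, rfl⟩
    rw [← commutatorElement_eq_one_iff_mul_comm, ← map_commutatorElement,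
      QuotientGroup.mk'_apply, QuotientGroup.eq_one_iff]
    exact hSN a ha b hb
  rw [hS'] at hcomm
  exact Function.Surjective.mul_comm (f := (topEquiv : (⊤ : Subgroup (G ⧸ N)) ≃* G ⧸ N).toMulHom)
    topEquiv.surjective hcomm

end Subgroup

theorem stmt_6_general {G : Type*} [Group G] (S : Set G)
    (hS : Subgroup.closure S = ⊤) (hcyc : IsCyclic (commutator G)) :
    commutator G =
      Subgroup.closure {x : G | ∃ a ∈ S, ∃ b ∈ S, x = a⁻¹ * b⁻¹ * a * b} := by
  set N := Subgroup.closure {x : G | ∃ a ∈ S, ∃ b ∈ S, x = a⁻¹ * b⁻¹ * a * b}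
  have hNC : N ≤ commutator G := by
    rw [Subgroup.closure_le]
    rintro _ ⟨a, -, b, -, rfl⟩
    rw [show a⁻¹ * b⁻¹ * a * b = ⁅a⁻¹, b⁻¹⁆ by simp [commutatorElement_def, mul_assoc]]
    exact Subgroup.commutator_mem_commutator (Subgroup.mem_top _) (Subgroup.mem_top _)
  have : N.Normal := Subgroup.normal_of_le_of_isCyclic hNC
  -- `a⁻¹ * b⁻¹ * a * b` is `⁅a⁻¹, b⁻¹⁆` in Mathlib's convention, hence the generating set `S⁻¹`.
  refine le_antisymm (Subgroup.commutator_le_of_commutatorElement_mem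
    (S := S⁻¹) (by rwa [Subgroup.closure_inv]) ?_) hNC
  intro a ha b hb
  apply Subgroup.subset_closure
  exact ⟨a⁻¹, ha, b⁻¹, hb, by simp [commutatorElement_def]⟩

theorem stmt_6 {G : Type*} [Group G] [Finite G] (S : Set G)
    (hS : Subgroup.closure S = ⊤) (hcyc : IsCyclic (commutator G)) :
    commutator G =
      Subgroup.closure {x : G | ∃ a ∈ S, ∃ b ∈ S, x = a⁻¹ * b⁻¹ * a * b} :=
  stmt_6_general S hS hcyc
end

section
/- If G is a finite group whose commutator subgroup [G,G] is cyclic of prime power order p^k with k ≥ 1, and S generates G, then there exist a, b ∈ S such that the commutator [a,b] generates [G,G]. -/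
/-!
Suppose no commutator `a⁻¹ b⁻¹ a b` of elements of `S` generates the cyclic group `[G,G]` of order
`p ^ k`. Then each of them has order dividing `p ^ (k - 1)`, so all of them lie in
`N = {x ∈ [G,G] | x ^ p ^ (k - 1) = 1}`, which is a normal subgroup of `G` because `[G,G]` is
abelian and normal. The images of `S` in `G ⧸ N` then commute pairwise and generate, so `G ⧸ N`
is abelian and `[G,G] ≤ N`, which is absurd for a generator of `[G,G]`, of order `p ^ k`.
-/

namespace Subgroup

variable {G : Type*} [Group G]

def torsionBy (H : Subgroup G) [IsMulCommutative H] (n : ℕ) : Subgroup G where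
  carrier := {x | x ∈ H ∧ x ^ n = 1}
  one_mem' := ⟨H.one_mem, one_pow n⟩
  mul_mem' := fun {x y} hx hy => ⟨H.mul_mem hx.1 hy.1, by
    rw [(show Commute x y from setLike_mul_comm hx.1 hy.1).mul_pow, hx.2, hy.2, one_mul]⟩
  inv_mem' := fun {x} hx => ⟨H.inv_mem hx.1, by rw [inv_pow, hx.2, inv_one]⟩

theorem mem_torsionBy {H : Subgroup G} [IsMulCommutative H] {n : ℕ} {x : G} :
    x ∈ H.torsionBy n ↔ x ∈ H ∧ x ^ n = 1 :=
  Iff.rfl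

instance torsionBy_normal (H : Subgroup G) [IsMulCommutative H] [H.Normal] (n : ℕ) :
    (H.torsionBy n).Normal where
  conj_mem x hx g :=
    ⟨‹H.Normal›.conj_mem x hx.1 g, by rw [conj_pow, hx.2, mul_one, mul_inv_cancel]⟩

theorem commutator_le_of_closure_eq_top {S : Set G} (hS : closure S = ⊤)
    {N : Subgroup G} [N.Normal]
    (hSN : ∀ a ∈ S, ∀ b ∈ S, a⁻¹ * b⁻¹ * a * b ∈ N) : _root_.commutator G ≤ N := by
  rw [← Normal.quotient_commutative_iff_commutator_le]
  set T := QuotientGroup.mk' N '' S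
  have hT : ∀ x ∈ T, ∀ y ∈ T, x * y = y * x := by
    rintro _ ⟨a, ha, rfl⟩ _ ⟨b, hb, rfl⟩
    refine (QuotientGroup.eq.mpr ?_).symm
    simpa [mul_assoc] using hSN a ha b hb
  have hcentral : ∀ x : G ⧸ N, x ∈ Set.centralizer (Set.centralizer T) := by
    have hclosure : closure T = ⊤ := by
      rw [← MonoidHom.map_closure, hS, ← MonoidHom.range_eq_map,
        MonoidHom.range_eq_top_of_surjective _ (QuotientGroup.mk'_surjective N)]
    exact fun x => closure_le_centralizer_centralizer T (hclosure ▸ mem_top x)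
  exact ⟨⟨fun x y => Set.centralizer_centralizer_comm_of_comm hT x (hcentral x) y (hcentral y)⟩⟩

end Subgroup

theorem pow_eq_one_of_zpowers_ne {G : Type*} [Group G] {H : Subgroup G} {p k : ℕ} (hp : p.Prime)
    (hcard : Nat.card H = p ^ k) {x : G} (hx : x ∈ H) (hne : Subgroup.zpowers x ≠ H) :
    x ^ p ^ (k - 1) = 1 := by
  have : Finite H := Nat.finite_of_card_ne_zero (hcard ▸ (pow_pos hp.pos k).ne')
  obtain ⟨i, hik, hi⟩ := (Nat.dvd_prime_pow hp).mp (hcard ▸ H.orderOf_dvd_natCard hx)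
  have hik' : i < k := by
    refine hik.lt_of_ne fun h => hne (Subgroup.eq_of_le_of_card_ge (Subgroup.zpowers_le.mpr hx) ?_)
    rw [Nat.card_zpowers, hi, h, hcard]
  exact orderOf_dvd_iff_pow_eq_one.mp (hi ▸ Nat.pow_dvd_pow p (by omega))

open scoped commutatorElement in
theorem stmt_7 {G : Type*} [Group G] [Finite G] (S : Set G)
    (hS : Subgroup.closure S = ⊤) (p k : ℕ) (hp : p.Prime) (hk : 1 ≤ k)
    (hcyc : IsCyclic (commutator G)) (hcard : Nat.card (commutator G) = p ^ k) :
    ∃ a ∈ S, ∃ b ∈ S, Subgroup.zpowers (a⁻¹ * b⁻¹ * a * b) = commutator G := by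
  by_contra! hne
  have hmem : ∀ a b : G, a⁻¹ * b⁻¹ * a * b ∈ commutator G := fun a b => by
    simpa [commutatorElement_def, commutator_def] using
      Subgroup.commutator_mem_commutator (Subgroup.mem_top a⁻¹) (Subgroup.mem_top b⁻¹)
  have hle : commutator G ≤ (commutator G).torsionBy (p ^ (k - 1)) :=
    Subgroup.commutator_le_of_closure_eq_top hS fun a ha b hb =>
      Subgroup.mem_torsionBy.mpr
        ⟨hmem a b, pow_eq_one_of_zpowers_ne hp hcard (hmem a b) (hne a ha b hb)⟩
  obtain ⟨g, hg⟩ := IsCyclic.exists_ofOrder_eq_natCard (α := commutator G)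
  have hlt : p ^ (k - 1) < orderOf (g : G) := by
    rw [Subgroup.orderOf_coe, hg, hcard]
    exact Nat.pow_lt_pow_right hp.one_lt (by omega)
  exact pow_ne_one_of_lt_orderOf (pow_pos hp.pos _).ne' hlt
    (Subgroup.mem_torsionBy.mp (hle g.2)).2
end

section
/- Every connected Cayley digraph on a finite abelian group has a hamiltonian path. That is, if G is a finite abelian group and S ⊆ G generates G, then the digraph with vertex set G and edges g → g+s for s ∈ S has a hamiltonian path. -/
/-! Induction on the generating set. Let `l` be a hamiltonian path through `H = ⟨T⟩` from `a`
to `b`, and let `m` be the order of `s` modulo `H`. With `d = b - a + s`, the translates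
`l + i • d` for `i < m` concatenate to a hamiltonian path through `⟨insert s T⟩`: the last vertex
`b + i • d` of one block steps by `s` to the first vertex `a + (i + 1) • d` of the next, and since
`d ≡ s` modulo `H` the blocks run through the `m` distinct cosets `H + i • s`. -/

/-- A hamiltonian path in the Cayley digraph of an additive group `G` with
connection set `S`: a list of all vertices, without repetition, in which each
vertex is followed by a vertex obtained by adding an element of `S`. -/
def IsAddHamiltonianPath {G : Type*} [AddGroup G] (S : Set G) (l : List G) : Prop :=
  l.Nodup ∧ (∀ g : G, g ∈ l) ∧ l.Chain' (fun x y => ∃ s ∈ S, y = x + s)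

open AddSubgroup QuotientAddGroup

section

variable {G : Type*} [AddCommGroup G]

def IsAddHamiltonianPathOn (S A : Set G) (l : List G) : Prop :=
  l.Nodup ∧ (∀ g, g ∈ l ↔ g ∈ A) ∧ l.IsChain (fun x y => ∃ s ∈ S, y = x + s)

theorem AddSubgroup.mem_closure_insert_iff {s g : G} {T : Set G} :
    g ∈ closure (insert s T) ↔ (g : G ⧸ closure T) ∈ zmultiples (s : G ⧸ closure T) := by
  constructor
  · refine fun hg => (closure_le ((zmultiples _).comap (mk' _))).2 ?_ hg
    rintro x (rfl | hx)
    · exact mem_zmultiples _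
    · simp [(eq_zero_iff x).2 (subset_closure hx)]
  · rintro ⟨k, hk⟩
    have hT : g - k • s ∈ closure (insert s T) :=
      closure_mono (Set.subset_insert s T) ((eq_zero_iff _).1 (by simp [← hk]))
    simpa using add_mem hT (zsmul_mem (subset_closure (Set.mem_insert s T)) k)

theorem isChain_flatMap_range_map_add_nsmul {S : Set G} {l : List G} (hne : l ≠ [])
    (hl : l.IsChain (fun x y => ∃ s ∈ S, y = x + s)) {s d : G} (hs : s ∈ S)
    (hd : l.getLast hne + s = l.head hne + d) (m : ℕ) :
    ((List.range m).flatMap fun i => l.map (· + i • d)).IsChain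
      (fun x y => ∃ s ∈ S, y = x + s) := by
  rw [List.flatMap_def, List.isChain_flatten (by simp [hne])]
  refine ⟨?_, ?_⟩
  · simp only [List.mem_map, List.mem_range]
    rintro _ ⟨i, -, rfl⟩
    refine List.isChain_map_of_isChain _ ?_ hl
    rintro x _ ⟨t, ht, rfl⟩
    exact ⟨t, ht, by abel⟩
  · rw [List.isChain_map, List.isChain_range]
    intro i _
    simp only [List.getLast?_map, List.getLast?_eq_some_getLast hne, List.head?_map,
      List.head?_eq_some_head hne, Option.map_some, Option.mem_def, Option.some.injEq, forall_eq']
    refine ⟨s, hs, ?_⟩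
    rw [succ_nsmul, add_right_comm _ _ s, hd]
    abel

theorem nodup_flatMap_range_map_add_nsmul {H : AddSubgroup G} {l : List G} (hl : l.Nodup)
    (hlH : ∀ x ∈ l, x ∈ H) (d : G) :
    ((List.range (addOrderOf (d : G ⧸ H))).flatMap fun i => l.map (· + i • d)).Nodup := by
  refine List.nodup_flatMap.2 ⟨fun i _ => hl.map (add_left_injective _),
    List.nodup_range.pairwise_of_forall_ne fun i hi j hj hij => ?_⟩
  refine List.disjoint_left.2 ?_
  simp only [List.mem_map]
  rintro _ ⟨x, hx, rfl⟩ ⟨y, hy, hxy⟩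
  refine hij (nsmul_injOn_Iio_addOrderOf (List.mem_range.1 hi) (List.mem_range.1 hj) ?_)
  have := congrArg (fun g : G => (g : G ⧸ H)) hxy
  simpa [(eq_zero_iff x).2 (hlH x hx), (eq_zero_iff y).2 (hlH y hy)] using this.symm

theorem mem_flatMap_range_map_add_nsmul_iff {H : AddSubgroup G} {l : List G}
    (hl : ∀ x, x ∈ l ↔ x ∈ H) {d : G} (hd : IsOfFinAddOrder (d : G ⧸ H)) {g : G} :
    g ∈ (List.range (addOrderOf (d : G ⧸ H))).flatMap (fun i => l.map (· + i • d)) ↔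
      (g : G ⧸ H) ∈ zmultiples (d : G ⧸ H) := by
  classical
  rw [hd.mem_zmultiples_iff_mem_range_addOrderOf]
  simp only [List.mem_flatMap, List.mem_range, List.mem_map, Finset.mem_image, Finset.mem_range,
    hl]
  refine exists_congr fun i => and_congr_right fun _ => ⟨?_, fun h => ?_⟩
  · rintro ⟨x, hx, rfl⟩
    simp [(eq_zero_iff x).2 hx]
  · exact ⟨g - i • d, (eq_zero_iff _).1 (by simp [h]), sub_add_cancel _ _⟩

theorem IsAddHamiltonianPathOn.exists_closure_insert {S T : Set G} {l : List G}
    (hl : IsAddHamiltonianPathOn S (closure T) l) {s : G} (hs : s ∈ S)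
    (hfin : IsOfFinAddOrder (s : G ⧸ closure T)) :
    ∃ l', IsAddHamiltonianPathOn S (closure (insert s T)) l' := by
  obtain ⟨hnd, hmem, hch⟩ := hl
  have hne : l ≠ [] := List.ne_nil_of_mem ((hmem 0).2 (zero_mem _))
  set d := l.getLast hne - l.head hne + s
  have hd : (d : G ⧸ closure T) = s := by
    have := (eq_zero_iff _).2
      (sub_mem ((hmem _).1 (l.getLast_mem hne)) ((hmem _).1 (l.head_mem hne)))
    simp [d, this]
  refine ⟨(List.range (addOrderOf (d : G ⧸ closure T))).flatMap fun i => l.map (· + i • d),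
    nodup_flatMap_range_map_add_nsmul hnd (fun x hx => (hmem x).1 hx) d, fun g => ?_,
    isChain_flatMap_range_map_add_nsmul hne hch hs (by simp only [d]; abel) _⟩
  rw [mem_flatMap_range_map_add_nsmul_iff hmem (hd ▸ hfin), hd, SetLike.mem_coe,
    mem_closure_insert_iff]

theorem exists_isAddHamiltonianPathOn_closure [Finite G] (S : Set G) :
    ∃ l, IsAddHamiltonianPathOn S (closure S) l := by
  refine S.toFinite.induction_on_subset
    (motive := fun T _ => ∃ l, IsAddHamiltonianPathOn S (closure T) l) S ?_ ?_
  · exact ⟨[0], by simp [IsAddHamiltonianPathOn]⟩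
  · rintro s T hs - - ⟨l, hl⟩
    exact hl.exists_closure_insert hs (isOfFinAddOrder_of_finite _)

end

theorem stmt_13 {G : Type*} [AddCommGroup G] [Finite G] (S : Set G)
    (hS : AddSubgroup.closure S = ⊤) :
    ∃ l : List G, IsAddHamiltonianPath S l := by
  obtain ⟨l, hnd, hmem, hch⟩ := exists_isAddHamiltonianPathOn_closure S
  exact ⟨l, hnd, fun g => (hmem g).2 (hS ▸ mem_top g), hch⟩
end

section
/- (Factor Group Lemma) Let N be a cyclic normal subgroup of a finite group G, and let (s₁, …, s_d) be a sequence of elements of a generating set S such that the images of e, s₁, s₁s₂, …, s₁⋯s_{d−1} form a complete list of the cosets of N (each exactly once) and s₁s₂⋯s_d ∈ N. Then the walk obtained by repeating (s₁,…,s_d) exactly |N| times is a hamiltonian cycle in Cay(G;S) if and only if s₁s₂⋯s_d generates N. -/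
/-!
Write `a = s₁⋯s_d` and `p r = s₁⋯s_r`. The `i`-th vertex of the repeated walk, for
`i = q d + r` with `r < d`, is `a ^ q * p r`. As `a ∈ N` and the `p r` lie in distinct cosets
of `N`, two such vertices coincide only if their `r` agree and then their powers of `a` agree.
So the `|N| d = |G|` vertices are distinct, hence exhaust `G`, iff `a, a², …, a^|N|` are
distinct, i.e. iff `a` has order `|N|`, i.e. iff `a` generates `N`.
-/

theorem List.prod_take_flatten_replicate {M : Type*} [Monoid M] (l : List M) {m i : ℕ}
    (hi : i < m * l.length) :
    ((replicate m l).flatten.take i).prod =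
      l.prod ^ (i / l.length) * (l.take (i % l.length)).prod := by
  induction m generalizing i with
  | zero => simp at hi
  | succ m ih =>
    rw [replicate_succ, flatten_cons, take_append, prod_append]
    rcases lt_or_ge i l.length with hlt | hle
    · simp [Nat.div_eq_of_lt hlt, Nat.mod_eq_of_lt hlt, Nat.sub_eq_zero_of_le hlt.le]
    · have hpos : 0 < l.length := Nat.pos_of_ne_zero fun h0 => by simp [h0] at hi
      rw [take_of_length_le hle, ih (by rw [Nat.succ_mul] at hi; omega),
        Nat.div_eq_sub_div hpos hle, Nat.mod_eq_sub_mod hle, pow_succ', mul_assoc]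

theorem List.Nodup.mem_of_length_eq_card {α : Type*} [Finite α] {l : List α} (h : l.Nodup)
    (hl : l.length = Nat.card α) (x : α) : x ∈ l := by
  have := Fintype.ofFinite α
  classical
  rw [← List.mem_toFinset, Finset.eq_univ_of_card l.toFinset
    (by rw [List.toFinset_card_of_nodup h, hl, Nat.card_eq_fintype_card])]
  exact Finset.mem_univ x

theorem List.nodup_map_range_iff_injOn {α : Type*} {f : ℕ → α} {n : ℕ} :
    ((range n).map f).Nodup ↔ Set.InjOn f (Set.Iio n) := by
  simp [nodup_map_iff_inj_on nodup_range, Set.InjOn]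

theorem injOn_pow_Iio_iff_le_orderOf {G : Type*} [Monoid G] {x : G} (hx : IsOfFinOrder x)
    {n : ℕ} :
    Set.InjOn (x ^ ·) (Set.Iio n) ↔ n ≤ orderOf x := by
  refine ⟨fun h => ?_, fun h => pow_injOn_Iio_orderOf.mono (Set.Iio_subset_Iio h)⟩
  by_contra! hlt
  have := h hlt (lt_of_le_of_lt (Nat.zero_le _) hlt) (by simp [pow_orderOf_eq_one])
  exact hx.orderOf_pos.ne' this

theorem Subgroup.zpowers_eq_iff_card_le_orderOf {G : Type*} [Group G] {H : Subgroup G}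
    [Finite H] {a : G} (ha : a ∈ H) : zpowers a = H ↔ Nat.card H ≤ orderOf a := by
  refine ⟨fun h => by rw [← h, Nat.card_zpowers], fun h => ?_⟩
  exact eq_of_le_of_card_ge (zpowers_le.mpr ha) (by rwa [Nat.card_zpowers])

theorem injOn_pow_div_mul_mod_iff {G : Type*} [Group G] {N : Subgroup G} [N.Normal] {a : G}
    {p : ℕ → G} {d n : ℕ} (ha : a ∈ N)
    (hp : Set.InjOn (fun r => (p r : G ⧸ N)) (Set.Iio d)) (hd : 0 < d) :
    Set.InjOn (fun i => a ^ (i / d) * p (i % d)) (Set.Iio (n * d)) ↔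
      Set.InjOn (a ^ ·) (Set.Iio n) := by
  constructor
  · intro h q hq q' hq' hqq'
    have := h ((Nat.mul_lt_mul_right hd).mpr hq) ((Nat.mul_lt_mul_right hd).mpr hq')
      (by simpa [Nat.mul_div_cancel _ hd] using congrArg (· * p 0) hqq')
    exact Nat.eq_of_mul_eq_mul_right hd this
  · intro h i hi j hj hij
    have hmod : i % d = j % d := by
      refine hp (Nat.mod_lt i hd) (Nat.mod_lt j hd) ?_
      have hN : (a : G ⧸ N) = 1 := (QuotientGroup.eq_one_iff a).mpr ha
      simpa [hN] using congrArg (fun g : G => (g : G ⧸ N)) hij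
    have hdiv : i / d = j / d := by
      refine h ((Nat.div_lt_iff_lt_mul hd).mpr hi) ((Nat.div_lt_iff_lt_mul hd).mpr hj) ?_
      exact mul_right_cancel (by simpa only [hmod] using hij)
    rw [← Nat.div_add_mod i d, ← Nat.div_add_mod j d, hmod, hdiv]

theorem stmt_18_general {G : Type*} [Group G] [Finite G] (N : Subgroup G) [N.Normal]
    (l : List G)
    -- the partial products `e, s₁, s₁s₂, …, s₁⋯s_{d-1}` hit each coset of `N`
    -- exactly once
    (hcover : ∀ q : G ⧸ N,
      ∃! i : Fin l.length, (QuotientGroup.mk ((l.take i).prod) : G ⧸ N) = q)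
    (hprod : l.prod ∈ N) :
    -- the walk repeating `(s₁, …, s_d)` exactly `|N|` times is a hamiltonian
    -- cycle iff `s₁s₂⋯s_d` generates `N`
    (((List.range ((List.replicate (Nat.card N) l).flatten.length)).map
        (fun i => ((List.replicate (Nat.card N) l).flatten.take i).prod)).Nodup ∧
      ∀ g : G, g ∈ (List.range ((List.replicate (Nat.card N) l).flatten.length)).map
        (fun i => ((List.replicate (Nat.card N) l).flatten.take i).prod)) ↔
      Subgroup.zpowers l.prod = N := by
  have hbij : Function.Bijective fun i : Fin l.length => ((l.take i).prod : G ⧸ N) :=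
    (Function.bijective_iff_existsUnique _).mpr hcover
  have hcard : Nat.card (G ⧸ N) = l.length := by
    simpa using (Nat.card_eq_of_bijective _ hbij).symm
  have hlength : (List.replicate (Nat.card N) l).flatten.length = Nat.card N * l.length := by
    simp
  have hp : Set.InjOn (fun r => ((l.take r).prod : G ⧸ N)) (Set.Iio l.length) :=
    fun r hr r' hr' h =>
      congrArg Fin.val (hbij.injective (a₁ := ⟨r, hr⟩) (a₂ := ⟨r', hr'⟩) h)
  have hwalk : Set.EqOn (fun i => ((List.replicate (Nat.card N) l).flatten.take i).prod)
      (fun i => l.prod ^ (i / l.length) * (l.take (i % l.length)).prod)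
      (Set.Iio (Nat.card N * l.length)) :=
    fun i hi => l.prod_take_flatten_replicate hi
  rw [Subgroup.zpowers_eq_iff_card_le_orderOf hprod,
    ← injOn_pow_Iio_iff_le_orderOf (isOfFinOrder_of_finite _),
    ← injOn_pow_div_mul_mod_iff hprod hp (hcard ▸ Nat.card_pos),
    ← hwalk.injOn_iff,
    ← List.nodup_map_range_iff_injOn, hlength]
  refine ⟨And.left, fun h => ⟨h, h.mem_of_length_eq_card ?_⟩⟩
  rw [List.length_map, List.length_range, Subgroup.card_eq_card_quotient_mul_card_subgroup N,
    hcard, mul_comm]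

theorem stmt_18 {G : Type*} [Group G] [Finite G] (N : Subgroup G) [N.Normal]
    (hcyc : IsCyclic N) (S : Set G) (l : List G) (hlS : ∀ x ∈ l, x ∈ S)
    (hne : l ≠ [])
    -- the partial products `e, s₁, s₁s₂, …, s₁⋯s_{d-1}` hit each coset of `N`
    -- exactly once
    (hcover : ∀ q : G ⧸ N,
      ∃! i : Fin l.length, (QuotientGroup.mk ((l.take i).prod) : G ⧸ N) = q)
    (hprod : l.prod ∈ N) :
    -- the walk repeating `(s₁, …, s_d)` exactly `|N|` times is a hamiltonian
    -- cycle iff `s₁s₂⋯s_d` generates `N`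
    (((List.range ((List.replicate (Nat.card N) l).flatten.length)).map
        (fun i => ((List.replicate (Nat.card N) l).flatten.take i).prod)).Nodup ∧
      ∀ g : G, g ∈ (List.range ((List.replicate (Nat.card N) l).flatten.length)).map
        (fun i => ((List.replicate (Nat.card N) l).flatten.take i).prod)) ↔
      Subgroup.zpowers l.prod = N :=
  stmt_18_general N l hcover hprod
end
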